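/- For the simple symmetric random walk with edge local times U_{n,r}, for every integers n ≥ 1 and u ≥ 0, Σ_{r=1}^∞ P[U_{n-1,r} = u and R_n = r] = 2^(-n) · C(n-1, ⌊(n+u)/2⌋), and moreover this quantity is at most 1/√n. -/

import Mathlib

/-!
Encode the first `n` steps as a word in `Bool`; these words are uniformly distributed, so the sum
is `2 ^ (-n)` times the number of words whose last crossed edge `r ≥ 1` was crossed exactly `u`
times before. Reversing time makes the last edge the first one; splitting on the first step of
the reversed walk and reflecting the walks that start upwards, this number becomes the number
`crossCount (n - 1) u 1` of walks of length `n - 1` crossing the edge `{0, 1}` exactly `u` times.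
A first-step decomposition shows that for `h ≥ 1` the numbers `crossCount m u h` satisfy Pascal's
recursion in `(m, h)`, at `h = 1` through the reflection symmetry
`crossCount m u 0 = crossCount m u 1`; hence `crossCount m u h = C(m, ⌊(m + u + h) / 2⌋)` for
`u ≥ 1`, while for `u = 0` it is a partial sum of such binomials. The bound follows from
`C(n - 1, k) ≤ C(n - 1, ⌊(n - 1) / 2⌋)` and `(2k + 1) C(2k, k) ^ 2 ≤ 4 ^ (2k + 1)`.
-/

open MeasureTheory ProbabilityTheory Finset

namespace Nat

lemma two_mul_add_one_mul_centralBinom_sq_le (k : ℕ) :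
    (2 * k + 1) * k.centralBinom ^ 2 ≤ 4 ^ (2 * k + 1) := by
  induction k with
  | zero => simp
  | succ k ih =>
    have key := Nat.succ_mul_centralBinom_succ k
    refine Nat.le_of_mul_le_mul_left ?_ (by positivity : 0 < (k + 1) ^ 2)
    calc (k + 1) ^ 2 * ((2 * (k + 1) + 1) * (k + 1).centralBinom ^ 2)
        = (2 * k + 3) * ((k + 1) * (k + 1).centralBinom) ^ 2 := by ring
      _ = (2 * k + 3) * (2 * k + 1) * 4 * ((2 * k + 1) * k.centralBinom ^ 2) := by
        rw [key]; ring
      _ ≤ (2 * k + 3) * (2 * k + 1) * 4 * 4 ^ (2 * k + 1) := Nat.mul_le_mul_left _ ih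
      _ ≤ (k + 1) ^ 2 * 16 * 4 ^ (2 * k + 1) := Nat.mul_le_mul_right _ (by nlinarith)
      _ = (k + 1) ^ 2 * 4 ^ (2 * (k + 1) + 1) := by ring

lemma succ_mul_choose_div_two_sq_le (m : ℕ) : (m + 1) * m.choose (m / 2) ^ 2 ≤ 4 ^ (m + 1) := by
  rcases Nat.even_or_odd' m with ⟨k, rfl | rfl⟩
  · rw [Nat.mul_div_cancel_left k two_pos]
    exact two_mul_add_one_mul_centralBinom_sq_le k
  · have hcb : (k + 1).centralBinom = 2 * (2 * k + 1).choose k := by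
      rw [Nat.centralBinom, show 2 * (k + 1) = 2 * k + 1 + 1 by ring, Nat.choose_succ_succ',
        Nat.choose_symm_half]
      ring
    rw [show (2 * k + 1) / 2 = k by omega]
    refine Nat.le_of_mul_le_mul_left ?_ (by norm_num : 0 < 4)
    calc 4 * ((2 * k + 1 + 1) * (2 * k + 1).choose k ^ 2)
        = (2 * k + 2) * (k + 1).centralBinom ^ 2 := by rw [hcb]; ring
      _ ≤ (2 * (k + 1) + 1) * (k + 1).centralBinom ^ 2 := Nat.mul_le_mul_right _ (by omega)
      _ ≤ 4 ^ (2 * (k + 1) + 1) := two_mul_add_one_mul_centralBinom_sq_le (k + 1)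
      _ = 4 * 4 ^ (2 * k + 1 + 1) := by ring

lemma choose_div_two_pow_le_inv_sqrt (m k : ℕ) :
    (m.choose k : ENNReal) / 2 ^ (m + 1) ≤ ENNReal.ofReal (1 / Real.sqrt (m + 1)) := by
  have hsq : ((m + 1) * m.choose k ^ 2 : ℝ) ≤ (2 ^ (m + 1)) ^ 2 := by
    rw [← pow_mul, mul_comm (m + 1), pow_mul, show (2 : ℝ) ^ 2 = 4 by norm_num]
    exact_mod_cast (Nat.mul_le_mul_left _ (Nat.pow_le_pow_left (Nat.choose_le_middle k m) 2)).trans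
      (succ_mul_choose_div_two_sq_le m)
  have hroot : Real.sqrt (m + 1) * m.choose k ≤ 2 ^ (m + 1) := by
    refine (pow_le_pow_iff_left₀ (by positivity) (by positivity) two_ne_zero).1 ?_
    rwa [mul_pow, Real.sq_sqrt (by positivity)]
  rw [ENNReal.le_ofReal_iff_toReal_le (ENNReal.div_lt_top (by simp) (by simp)).ne (by positivity)]
  simp only [ENNReal.toReal_div, ENNReal.toReal_natCast, ENNReal.toReal_pow, ENNReal.toReal_ofNat]
  rw [div_le_div_iff₀ (by positivity) (by positivity)]
  linarith

end Nat

namespace SimpleWalk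

def step (b : Bool) : ℤ := if b then 1 else -1

def height (l : List Bool) : ℤ := (l.map step).sum

@[simp] lemma height_nil : height [] = 0 := rfl

@[simp] lemma height_cons (b : Bool) (l : List Bool) : height (b :: l) = step b + height l := by
  simp [height]

@[simp] lemma height_append (l₁ l₂ : List Bool) : height (l₁ ++ l₂) = height l₁ + height l₂ := by
  simp [height]

@[simp] lemma height_reverse (l : List Bool) : height l.reverse = height l := by
  simp [height, List.map_reverse]

@[simp] lemma height_map_not (l : List Bool) : height (l.map not) = -height l := by
  induction l with
  | nil => rfl
  | cons b l ih => cases b <;> simp [ih, step] <;> ring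

/-- The edges crossed by the walk with steps `l` started at `0`: a step between the levels
`a` and `a ± 1` crosses the edge `max a (a ± 1)`, so edge `r` joins `r - 1` and `r`. -/
def edges : List Bool → List ℤ
  | [] => []
  | b :: l => max 0 (step b) :: (edges l).map (· + step b)

@[simp] lemma edges_nil : edges [] = [] := rfl

@[simp] lemma edges_cons (b : Bool) (l : List Bool) :
    edges (b :: l) = max 0 (step b) :: (edges l).map (· + step b) := rfl

@[simp] lemma length_edges (l : List Bool) : (edges l).length = l.length := by
  induction l with
  | nil => rfl
  | cons b l ih => simp [ih]

lemma getElem_edges (l : List Bool) (i : ℕ) (hi : i < (edges l).length) :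
    (edges l)[i] = max (height (l.take i)) (height (l.take (i + 1))) := by
  induction l generalizing i with
  | nil => simp at hi
  | cons b l ih =>
    cases i with
    | zero => simp
    | succ i =>
      simp only [edges_cons, List.getElem_cons_succ, List.getElem_map, ih, List.take_succ_cons,
        height_cons]
      omega

lemma edges_concat (l : List Bool) (b : Bool) :
    edges (l ++ [b]) = edges l ++ [height l + max 0 (step b)] := by
  induction l with
  | nil => simp
  | cons a l ih =>
    simp only [List.cons_append, edges_cons, ih, List.map_append, List.map_cons, List.map_nil,
      height_cons]
    congr 3
    ring

lemma edges_reverse (l : List Bool) :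
    edges l.reverse = (edges l).reverse.map (height l + 1 - ·) := by
  induction l with
  | nil => simp
  | cons b l ih =>
    have hb : max 0 (step b) + max 0 (step b) = step b + 1 := by cases b <;> simp [step]
    simp only [List.reverse_cons, edges_concat, ih, edges_cons, List.map_append, List.map_cons,
      List.map_nil, List.map_reverse, List.map_map, height_reverse, height_cons]
    congr 2
    · congr 1
      funext x
      simp only [Function.comp_apply]
      ring
    · omega

lemma edges_map_not (l : List Bool) : edges (l.map not) = (edges l).map (1 - ·) := by
  induction l with
  | nil => rfl
  | cons b l ih =>
    simp only [List.map_cons, edges_cons, ih, List.map_map]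
    congr 1
    · cases b <;> rfl
    · congr 1
      funext x
      cases b <;> simp [step] <;> ring

lemma count_map_add (E : List ℤ) (a r : ℤ) : (E.map (· + a)).count r = E.count (r - a) := by
  simpa using List.count_map_of_injective E (· + a) (add_left_injective a) (r - a)

lemma count_map_sub (E : List ℤ) (a r : ℤ) : (E.map (a - ·)).count r = E.count (a - r) := by
  simpa using List.count_map_of_injective E (a - ·) sub_right_injective (a - r)

def lastEdge (l : List Bool) : ℤ := (edges l).getLastD 0

def prevCrossings (l : List Bool) : ℕ := (edges l).dropLast.count (lastEdge l)

lemma edges_reverse_cons (b : Bool) (l : List Bool) :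
    edges (b :: l).reverse =
      (edges l).reverse.map (height l + 1 - ·) ++ [height l + if b then 1 else 0] := by
  rw [edges_reverse, edges_cons, List.reverse_cons, List.map_append, List.map_reverse,
    List.map_reverse, List.map_map]
  congr 2
  · congr 1
    funext x
    simp only [Function.comp_apply, height_cons]
    ring
  · cases b <;> simp [step]
    ring

lemma lastEdge_reverse_cons (b : Bool) (l : List Bool) :
    lastEdge (b :: l).reverse = height l + if b then 1 else 0 := by
  rw [lastEdge, edges_reverse_cons, List.getLastD_concat]

lemma prevCrossings_reverse_cons (b : Bool) (l : List Bool) :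
    prevCrossings (b :: l).reverse = (edges l).count (if b then 0 else 1) := by
  rw [prevCrossings, lastEdge_reverse_cons, edges_reverse_cons, List.dropLast_concat,
    count_map_sub, List.count_reverse]
  congr 1
  cases b <;> simp

open Classical in
noncomputable def pathCount (m : ℕ) (P : List Bool → Prop) : ℕ :=
  #{v : Fin m → Bool | P (List.ofFn v)}

lemma pathCount_eq_sum (m : ℕ) (P : List Bool → Prop) [DecidablePred P] :
    pathCount m P = ∑ v : Fin m → Bool, if P (List.ofFn v) then 1 else 0 := by
  rw [pathCount, card_filter]
  congr!

lemma pathCount_zero (P : List Bool → Prop) [Decidable (P [])] :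
    pathCount 0 P = if P [] then 1 else 0 := by
  classical
  rw [pathCount_eq_sum, Fintype.sum_unique]
  simp

lemma pathCount_succ (m : ℕ) (P : List Bool → Prop) :
    pathCount (m + 1) P =
      pathCount m (fun l => P (true :: l)) + pathCount m (fun l => P (false :: l)) := by
  classical
  simp only [pathCount_eq_sum]
  rw [← (Fin.consEquiv fun _ => Bool).sum_comp, Fintype.sum_prod_type, Fintype.sum_bool]
  simp [Fin.consEquiv, List.ofFn_succ]

lemma pathCount_comp_of_equiv {m : ℕ} (e : (Fin m → Bool) ≃ (Fin m → Bool))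
    (f : List Bool → List Bool) (hf : ∀ v, List.ofFn (e v) = f (List.ofFn v))
    (P : List Bool → Prop) : pathCount m (fun l => P (f l)) = pathCount m P := by
  classical
  simp only [pathCount_eq_sum, ← hf]
  exact e.sum_comp fun v => if P (List.ofFn v) then 1 else 0

lemma pathCount_reverse (m : ℕ) (P : List Bool → Prop) :
    pathCount m (fun l => P l.reverse) = pathCount m P := by
  refine pathCount_comp_of_equiv (Equiv.arrowCongr Fin.revPerm (Equiv.refl _)) _ (fun v => ?_) P
  refine List.ext_getElem (by simp) fun i h _ => ?_
  simp only [List.getElem_ofFn, List.getElem_reverse, List.length_ofFn]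
  exact congrArg v (Fin.ext (by simp; omega))

lemma pathCount_map_not (m : ℕ) (P : List Bool → Prop) :
    pathCount m (fun l => P (l.map not)) = pathCount m P :=
  pathCount_comp_of_equiv (Equiv.arrowCongr (Equiv.refl _) (Equiv.boolNot)) _
    (fun v => by simp [List.map_ofFn]; rfl) P

lemma pathCount_and_add_and_not (m : ℕ) (P Q : List Bool → Prop) :
    pathCount m (fun l => Q l ∧ P l) + pathCount m (fun l => ¬Q l ∧ P l) = pathCount m P := by
  classical
  simp only [pathCount_eq_sum, ← sum_add_distrib]
  refine sum_congr rfl fun v _ => ?_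
  by_cases hQ : Q (List.ofFn v) <;> simp [hQ]

noncomputable def crossCount (m u : ℕ) (r : ℤ) : ℕ := pathCount m (fun l => (edges l).count r = u)

lemma crossCount_zero (u : ℕ) (r : ℤ) : crossCount 0 u r = if u = 0 then 1 else 0 := by
  rw [crossCount, pathCount_zero]
  simp [eq_comm]

lemma crossCount_one_sub (m u : ℕ) (r : ℤ) : crossCount m u (1 - r) = crossCount m u r := by
  rw [crossCount, ← pathCount_map_not]
  simp [crossCount, edges_map_not, count_map_sub]

lemma crossCount_succ_of_two_le (m u : ℕ) {r : ℤ} (hr : 2 ≤ r) :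
    crossCount (m + 1) u r = crossCount m u (r - 1) + crossCount m u (r + 1) := by
  have h₁ : (1 : ℤ) ≠ r := by omega
  have h₀ : (0 : ℤ) ≠ r := by omega
  simp [crossCount, pathCount_succ, count_map_add, step, h₀, h₁]

lemma crossCount_succ_zero_one (m : ℕ) : crossCount (m + 1) 0 1 = crossCount m 0 2 := by
  simp only [crossCount, pathCount_succ]
  simp [count_map_add, step, pathCount]

lemma crossCount_succ_succ_one (m u : ℕ) :
    crossCount (m + 1) (u + 1) 1 = crossCount m u 0 + crossCount m (u + 1) 2 := by
  simp [crossCount, pathCount_succ, count_map_add, step]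

lemma choose_div_two_eq_choose_succ_div_two (m : ℕ) :
    m.choose (m / 2) = m.choose ((m + 1) / 2) := by
  rcases Nat.even_or_odd' m with ⟨k, rfl | rfl⟩
  · congr 1
    omega
  · rw [show (2 * k + 1) / 2 = k by omega, show (2 * k + 1 + 1) / 2 = k + 1 by omega,
      Nat.choose_symm_half]

/-- The number of walks of length `m` that never cross the edge `h ≥ 1`, i.e. stay below `h`. -/
def sumChooseHalf (m h : ℕ) : ℕ := ∑ i ∈ range h, m.choose ((m + i + 1) / 2)

lemma sumChooseHalf_succ_succ (m h : ℕ) :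
    sumChooseHalf (m + 1) (h + 1) = sumChooseHalf m h + sumChooseHalf m (h + 2) := by
  induction h with
  | zero =>
    simp only [sumChooseHalf, sum_range_succ, sum_range_zero]
    rw [show (m + 1 + 0 + 1) / 2 = m / 2 + 1 by omega, Nat.choose_succ_succ',
      choose_div_two_eq_choose_succ_div_two, show m / 2 + 1 = (m + 1 + 1) / 2 by omega]
    simp
  | succ h ih =>
    rw [sumChooseHalf, sum_range_succ, ← sumChooseHalf, ih]
    simp only [sumChooseHalf, sum_range_succ]
    rw [show (m + 1 + (h + 1) + 1) / 2 = (m + h + 1) / 2 + 1 by omega, Nat.choose_succ_succ',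
      show (m + h + 1) / 2 + 1 = (m + (h + 2) + 1) / 2 by omega]
    ring

theorem crossCount_eq (m : ℕ) :
    (∀ h : ℕ, crossCount m 0 (h + 1) = sumChooseHalf m (h + 1)) ∧
      ∀ u h : ℕ, crossCount m (u + 1) (h + 1) = m.choose ((m + u + h + 2) / 2) := by
  induction m with
  | zero =>
    refine ⟨fun h => ?_, fun u h => ?_⟩
    · rw [crossCount_zero, sumChooseHalf, sum_range_succ']
      simp [Nat.choose_eq_zero_of_lt]
    · rw [crossCount_zero, Nat.choose_eq_zero_of_lt (by omega)]
      simp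
  | succ m ih =>
    obtain ⟨ih₀, ih⟩ := ih
    have h_one : ∀ u, crossCount m u 1 = m.choose ((m + u + 1) / 2) := by
      rintro (_ | u)
      · simpa [sumChooseHalf] using ih₀ 0
      · simpa [add_assoc] using ih u 0
    refine ⟨fun h => ?_, fun u h => ?_⟩
    · rcases h with _ | h
      · rw [Nat.cast_zero, zero_add, crossCount_succ_zero_one,
          show (2 : ℤ) = (1 : ℕ) + 1 by norm_num, ih₀, sumChooseHalf_succ_succ]
        simp [sumChooseHalf]
      · rw [crossCount_succ_of_two_le _ _ (by omega), sumChooseHalf_succ_succ,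
          show ((h + 1 : ℕ) : ℤ) + 1 - 1 = h + 1 by push_cast; ring,
          show ((h + 1 : ℕ) : ℤ) + 1 + 1 = (h + 2 : ℕ) + 1 by push_cast; ring, ih₀, ih₀]
    · rcases h with _ | h
      · rw [Nat.cast_zero, zero_add, crossCount_succ_succ_one, ← crossCount_one_sub, sub_zero,
          show (2 : ℤ) = (1 : ℕ) + 1 by norm_num, h_one, ih,
          show (m + 1 + u + 0 + 2) / 2 = (m + u + 1) / 2 + 1 by omega, Nat.choose_succ_succ']
        congr 2
        omega
      · rw [crossCount_succ_of_two_le _ _ (by omega),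
          show ((h + 1 : ℕ) : ℤ) + 1 - 1 = h + 1 by push_cast; ring,
          show ((h + 1 : ℕ) : ℤ) + 1 + 1 = (h + 2 : ℕ) + 1 by push_cast; ring, ih, ih,
          show (m + 1 + u + (h + 1) + 2) / 2 = (m + u + h + 2) / 2 + 1 by omega,
          Nat.choose_succ_succ']
        congr 2
        omega

lemma crossCount_one (m u : ℕ) : crossCount m u 1 = m.choose ((m + u + 1) / 2) := by
  rcases u with _ | u
  · simpa [sumChooseHalf] using (crossCount_eq m).1 0
  · simpa [add_assoc] using (crossCount_eq m).2 u 0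

theorem pathCount_lastEdge (m u : ℕ) :
    pathCount (m + 1) (fun l => 1 ≤ lastEdge l ∧ prevCrossings l = u) =
      m.choose ((m + u + 1) / 2) := by
  rw [← pathCount_reverse, pathCount_succ, ← pathCount_map_not m]
  simp only [lastEdge_reverse_cons, prevCrossings_reverse_cons, height_map_not, edges_map_not,
    count_map_sub, if_true, Bool.false_eq_true, if_false, add_zero, sub_zero]
  rw [← crossCount_one, crossCount,
    ← pathCount_and_add_and_not m (fun l => (edges l).count 1 = u) (fun l => 1 ≤ height l),
    add_comm]
  congr 2
  funext l
  exact propext (and_congr_left fun _ => by omega)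

lemma sum_Icc_ite_eq_count (f : ℕ → ℤ) (r : ℤ) (j : ℕ) :
    (∑ k ∈ Icc 1 j, if f k = r then 1 else 0) = (List.ofFn fun k : Fin j => f (k + 1)).count r := by
  induction j with
  | zero => simp
  | succ j ih =>
    rw [sum_Icc_succ_top (by omega), ih, List.ofFn_succ_last, List.count_append]
    simp [List.count_singleton]

lemma tsum_measure_preimage_and_eq_add_one {Ω α : Type*} [MeasurableSpace Ω] [MeasurableSpace α]
    [Countable α] [MeasurableSingletonClass α] (μ : Measure Ω) {f : Ω → α} (hf : Measurable f)
    (g : α → ℤ) (p : α → Prop) :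
    ∑' r : ℕ, μ (f ⁻¹' {a | g a = r + 1 ∧ p a}) = μ (f ⁻¹' {a | 1 ≤ g a ∧ p a}) := by
  have hdisj : Pairwise (Function.onFun Disjoint fun r : ℕ => {a | g a = r + 1 ∧ p a}) :=
    fun r s hrs => Set.disjoint_left.2 fun a hr hs => hrs (by have := hr.1.symm.trans hs.1; omega)
  rw [← measure_iUnion (fun r s hrs => (hdisj hrs).preimage f)
    fun r => hf (Set.to_countable _).measurableSet, ← Set.preimage_iUnion]
  congr 2
  ext a
  simp only [Set.mem_iUnion, Set.mem_ofPred_eq]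
  constructor
  · rintro ⟨r, hr, hp⟩
    exact ⟨by omega, hp⟩
  · rintro ⟨hg, hp⟩
    exact ⟨(g a - 1).toNat, by omega, hp⟩

section Probability

variable {Ω : Type*} {V : ℕ → Ω → ℤ}

def stepsUpTo (V : ℕ → Ω → ℤ) (n : ℕ) (ω : Ω) : Fin n → Bool := fun k => V (k + 1) ω = 1

lemma step_decide_eq_one {x : ℤ} (hx : x = 1 ∨ x = -1) : step (decide (x = 1)) = x := by
  rcases hx with rfl | rfl <;> rfl

lemma height_take_stepsUpTo (hVval : ∀ n ω, V n ω = 1 ∨ V n ω = -1) {S : ℕ → Ω → ℤ}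
    (hS : ∀ n ω, S n ω = ∑ k ∈ Icc 1 n, V k ω) {n j : ℕ} (hj : j ≤ n) (ω : Ω) :
    height ((List.ofFn (stepsUpTo V n ω)).take j) = S j ω := by
  induction j with
  | zero => simp [hS]
  | succ j ih =>
    rw [List.take_add_one, List.getElem?_ofFn, dif_pos (by omega), height_append, ih (by omega),
      hS, hS, sum_Icc_succ_top (by omega)]
    simp [height, stepsUpTo, step_decide_eq_one (hVval _ _)]

lemma edges_stepsUpTo (hVval : ∀ n ω, V n ω = 1 ∨ V n ω = -1) {S R : ℕ → Ω → ℤ}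
    (hS : ∀ n ω, S n ω = ∑ k ∈ Icc 1 n, V k ω)
    (hR : ∀ n ω, R n ω = (1 + S (n - 1) ω + S n ω) / 2) (n : ℕ) (ω : Ω) :
    edges (List.ofFn (stepsUpTo V n ω)) = List.ofFn fun k : Fin n => R (k + 1) ω := by
  refine List.ext_getElem (by simp) fun i hi _ => ?_
  simp only [length_edges, List.length_ofFn] at hi
  rw [getElem_edges, List.getElem_ofFn, height_take_stepsUpTo hVval hS hi.le,
    height_take_stepsUpTo hVval hS (show i + 1 ≤ n from hi), hR, Fin.val_mk, Nat.add_sub_cancel]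
  have hstep : S (i + 1) ω = S i ω + V (i + 1) ω := by rw [hS, hS, sum_Icc_succ_top (by omega)]
  rcases hVval (i + 1) ω with h | h <;> omega

lemma lastEdge_stepsUpTo (hVval : ∀ n ω, V n ω = 1 ∨ V n ω = -1) {S R : ℕ → Ω → ℤ}
    (hS : ∀ n ω, S n ω = ∑ k ∈ Icc 1 n, V k ω)
    (hR : ∀ n ω, R n ω = (1 + S (n - 1) ω + S n ω) / 2) (m : ℕ) (ω : Ω) :
    lastEdge (List.ofFn (stepsUpTo V (m + 1) ω)) = R (m + 1) ω := by
  rw [lastEdge, edges_stepsUpTo hVval hS hR, List.ofFn_succ_last, List.getLastD_concat,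
    Fin.val_last]

lemma prevCrossings_stepsUpTo (hVval : ∀ n ω, V n ω = 1 ∨ V n ω = -1) {S R : ℕ → Ω → ℤ}
    (hS : ∀ n ω, S n ω = ∑ k ∈ Icc 1 n, V k ω)
    (hR : ∀ n ω, R n ω = (1 + S (n - 1) ω + S n ω) / 2) {U : ℕ → ℤ → Ω → ℕ}
    (hU : ∀ n r ω, U n r ω = ∑ k ∈ Icc 1 n, if R k ω = r then 1 else 0) (m : ℕ) (ω : Ω) :
    prevCrossings (List.ofFn (stepsUpTo V (m + 1) ω)) = U m (R (m + 1) ω) ω := by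
  rw [prevCrossings, lastEdge_stepsUpTo hVval hS hR, edges_stepsUpTo hVval hS hR,
    List.ofFn_succ_last, List.dropLast_concat, hU, sum_Icc_ite_eq_count]
  rfl

variable [MeasurableSpace Ω] {P : Measure Ω}

lemma measurable_stepsUpTo (hVmeas : ∀ n, Measurable (V n)) (n : ℕ) :
    Measurable (stepsUpTo V n) :=
  measurable_pi_lambda _ fun k =>
    (measurable_of_countable fun z : ℤ => decide (z = 1)).comp (hVmeas (k + 1))

lemma measure_decide_eq_one_preimage [IsProbabilityMeasure P] (hVmeas : ∀ n, Measurable (V n))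
    (hVfair : ∀ n, P {ω | V n ω = 1} = 1 / 2) (i : ℕ) (b : Bool) :
    P ((fun ω => decide (V i ω = 1)) ⁻¹' {b}) = 2⁻¹ := by
  have hmeas : MeasurableSet {ω | V i ω = 1} := hVmeas i (measurableSet_singleton 1)
  cases b
  · rw [show (fun ω => decide (V i ω = 1)) ⁻¹' {false} = {ω | V i ω = 1}ᶜ by ext; simp,
      prob_compl_eq_one_sub hmeas, hVfair, one_div, ENNReal.one_sub_inv_two]
  · rw [show (fun ω => decide (V i ω = 1)) ⁻¹' {true} = {ω | V i ω = 1} by ext; simp, hVfair,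
      one_div]

lemma measure_stepsUpTo_preimage_singleton [IsProbabilityMeasure P]
    (hVmeas : ∀ n, Measurable (V n)) (hVfair : ∀ n, P {ω | V n ω = 1} = 1 / 2)
    (hVindep : iIndepFun V P) {n : ℕ} (v : Fin n → Bool) :
    P (stepsUpTo V n ⁻¹' {v}) = (2 ^ n)⁻¹ := by
  have hindep : iIndepFun (fun k : Fin n => fun ω => decide (V (k + 1) ω = 1)) P :=
    (hVindep.comp (fun _ z => decide (z = 1)) fun _ => measurable_of_countable _).precomp
      fun k l hkl => Fin.ext (by simpa using hkl)
  have hcyl :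
      stepsUpTo V n ⁻¹' {v} = ⋂ k : Fin n, (fun ω => decide (V (k + 1) ω = 1)) ⁻¹' {v k} := by
    ext ω
    simp [stepsUpTo, funext_iff]
  rw [hcyl, hindep.meas_iInter fun k => ⟨{v k}, measurableSet_singleton _, rfl⟩]
  simp [measure_decide_eq_one_preimage hVmeas hVfair, ENNReal.inv_pow]

lemma measure_stepsUpTo_preimage [IsProbabilityMeasure P]
    (hVmeas : ∀ n, Measurable (V n)) (hVfair : ∀ n, P {ω | V n ω = 1} = 1 / 2)
    (hVindep : iIndepFun V P) (n : ℕ) (Q : List Bool → Prop) :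
    P (stepsUpTo V n ⁻¹' {v | Q (List.ofFn v)}) = pathCount n Q / 2 ^ n := by
  classical
  rw [pathCount, ← coe_filter_univ, ← sum_measure_preimage_singleton _
    fun _ _ => measurable_stepsUpTo hVmeas n (measurableSet_singleton _)]
  simp [measure_stepsUpTo_preimage_singleton hVmeas hVfair hVindep, div_eq_mul_inv]

end Probability

end SimpleWalk

open SimpleWalk

/-- For the simple symmetric random walk, the probability that the walk crossed its
current edge exactly `u` times before step `n`:
`Σ_{r=1}^∞ P[U_{n-1,r} = u, R_n = r] = 2^(-n)·C(n-1, ⌊(n+u)/2⌋) ≤ 1/√n`. -/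
theorem stmt7
    {Ω : Type*} [MeasurableSpace Ω] (P : Measure Ω) [IsProbabilityMeasure P]
    (V : ℕ → Ω → ℤ)
    (hVmeas : ∀ n, Measurable (V n))
    (hVval : ∀ n ω, V n ω = 1 ∨ V n ω = -1)
    (hVfair : ∀ n, P {ω | V n ω = 1} = 1 / 2)
    (hVindep : iIndepFun V P)
    (S : ℕ → Ω → ℤ) (hS : ∀ n ω, S n ω = ∑ k ∈ Finset.Icc 1 n, V k ω)
    (R : ℕ → Ω → ℤ) (hR : ∀ n ω, R n ω = (1 + S (n - 1) ω + S n ω) / 2)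
    (U : ℕ → ℤ → Ω → ℕ)
    (hU : ∀ n r ω, U n r ω = ∑ k ∈ Finset.Icc 1 n, if R k ω = r then 1 else 0) :
    ∀ n : ℕ, 1 ≤ n → ∀ u : ℕ,
      (∑' r : ℕ, P {ω | U (n - 1) ((r : ℤ) + 1) ω = u ∧ R n ω = (r : ℤ) + 1}) =
        ((n - 1).choose ((n + u) / 2) : ENNReal) / 2 ^ n ∧
      ((n - 1).choose ((n + u) / 2) : ENNReal) / 2 ^ n ≤
        ENNReal.ofReal (1 / Real.sqrt n) := by
  intro n hn u
  obtain ⟨m, rfl⟩ := Nat.exists_eq_add_of_le' hn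
  have hevent : ∀ r : ℕ, {ω | U m (r + 1) ω = u ∧ R (m + 1) ω = r + 1} = stepsUpTo V (m + 1) ⁻¹'
      {v | lastEdge (List.ofFn v) = r + 1 ∧ prevCrossings (List.ofFn v) = u} := fun r => by
    ext ω
    simp only [Set.mem_ofPred_eq, Set.mem_preimage, lastEdge_stepsUpTo hVval hS hR,
      prevCrossings_stepsUpTo hVval hS hR hU]
    exact and_comm.trans (and_congr_right fun hlast => by rw [hlast])
  simp only [Nat.add_sub_cancel, hevent]
  rw [tsum_measure_preimage_and_eq_add_one P (measurable_stepsUpTo hVmeas _),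
    measure_stepsUpTo_preimage hVmeas hVfair hVindep (m + 1)
      (fun l => 1 ≤ lastEdge l ∧ prevCrossings l = u), pathCount_lastEdge,
    show m + u + 1 = m + 1 + u by ring]
  exact ⟨rfl, by simpa using Nat.choose_div_two_pow_le_inv_sqrt m ((m + 1 + u) / 2)⟩
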